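/- arXiv:2511.23451 — 2 statements merged into one kernel-verified Lean document; each statement's English description precedes it below -/
import Mathlib

section
/- Let A ≥ B ≥ 0 be positive semidefinite matrices and α ≥ 1. Then Tr[A^α] ≥ Tr[B^α]. -/
open Matrix BigOperators
open scoped ComplexOrder

/-- Real matrix power `A^α` of a Hermitian matrix, defined by functional calculus
on the eigenvalues (and `0` if `A` is not Hermitian). -/
noncomputable def matRpow {n : Type*} [Fintype n] [DecidableEq n]
    (A : Matrix n n ℂ) (α : ℝ) : Matrix n n ℂ :=
  if hA : A.IsHermitian then
    (hA.eigenvectorUnitary : Matrix n n ℂ) *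
      diagonal (fun i => ((hA.eigenvalues i ^ α : ℝ) : ℂ)) *
      (hA.eigenvectorUnitary : Matrix n n ℂ)ᴴ
  else 0

/-!
Let `aᵢ, uᵢ` and `bⱼ, vⱼ` be eigenvalues and orthonormal eigenvectors of `A` and `B`. Since
`A - B ≥ 0`, `bⱼ = ⟪vⱼ, B vⱼ⟫ ≤ ⟪vⱼ, A vⱼ⟫ = ∑ᵢ |⟪uᵢ, vⱼ⟫|² aᵢ`, a convex combination of the `aᵢ`.
As `f x = x ^ α` is monotone and convex on `[0, ∞)`, `f bⱼ ≤ ∑ᵢ |⟪uᵢ, vⱼ⟫|² f aᵢ` (Jensen), and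
summing over `j` the weights `|⟪uᵢ, vⱼ⟫|²` add up to `1` for each `i` (Parseval), so
`∑ⱼ f bⱼ ≤ ∑ᵢ f aᵢ`.
-/

open scoped InnerProductSpace

namespace Matrix.IsHermitian

variable {𝕜 n : Type*} [RCLike 𝕜] [Fintype n] [DecidableEq n] {A : Matrix n n 𝕜}

lemma re_dotProduct_mulVec_eq_sum (hA : A.IsHermitian) (x : EuclideanSpace 𝕜 n) :
    RCLike.re (star ⇑x ⬝ᵥ (A *ᵥ ⇑x)) =
      ∑ i, ‖⟪hA.eigenvectorBasis i, x⟫_𝕜‖ ^ 2 * hA.eigenvalues i := by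
  set u := hA.eigenvectorBasis
  have hAx : A *ᵥ ⇑x = ∑ i, ⟪u i, x⟫_𝕜 • hA.eigenvalues i • ⇑(u i) := by
    conv_lhs => rw [← u.sum_repr' x]
    simp [mulVec_sum, mulVec_smul, hA.mulVec_eigenvectorBasis, u]
  have hcoeff : ∀ i, star ⇑x ⬝ᵥ ⇑(u i) = star ⟪u i, x⟫_𝕜 := fun i => by
    rw [← starRingEnd_apply (R := 𝕜), inner_conj_symm, dotProduct_comm]; rfl
  rw [hAx, dotProduct_sum, map_sum]
  refine Finset.sum_congr rfl fun i _ => ?_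
  rw [dotProduct_smul, dotProduct_smul, hcoeff, smul_eq_mul, RCLike.real_smul_eq_coe_mul,
    mul_left_comm, ← starRingEnd_apply, RCLike.mul_conj, mul_comm]
  norm_cast

lemma re_dotProduct_mulVec_mem (hA : A.IsHermitian) {s : Set ℝ} (hs : Convex ℝ s)
    (hAs : ∀ i, hA.eigenvalues i ∈ s) {x : EuclideanSpace 𝕜 n} (hx : ‖x‖ = 1) :
    RCLike.re (star ⇑x ⬝ᵥ (A *ᵥ ⇑x)) ∈ s := by
  rw [hA.re_dotProduct_mulVec_eq_sum]
  exact hs.sum_mem (fun _ _ => by positivity)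
    (by rw [OrthonormalBasis.sum_sq_norm_inner_right, hx, one_pow]) fun i _ => hAs i

/-- **Peierls' inequality**. -/
lemma map_re_dotProduct_mulVec_le_sum (hA : A.IsHermitian) {f : ℝ → ℝ} {s : Set ℝ}
    (hf : ConvexOn ℝ s f) (hAs : ∀ i, hA.eigenvalues i ∈ s) {x : EuclideanSpace 𝕜 n}
    (hx : ‖x‖ = 1) :
    f (RCLike.re (star ⇑x ⬝ᵥ (A *ᵥ ⇑x))) ≤
      ∑ i, ‖⟪hA.eigenvectorBasis i, x⟫_𝕜‖ ^ 2 * f (hA.eigenvalues i) := by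
  rw [hA.re_dotProduct_mulVec_eq_sum]
  exact hf.map_sum_le (fun _ _ => by positivity)
    (by rw [OrthonormalBasis.sum_sq_norm_inner_right, hx, one_pow]) fun i _ => hAs i

end Matrix.IsHermitian

namespace Matrix

variable {𝕜 n : Type*} [RCLike 𝕜] [Fintype n] [DecidableEq n]

theorem sum_map_eigenvalues_le_of_posSemidef_sub {A B : Matrix n n 𝕜} (hA : A.IsHermitian)
    (hB : B.IsHermitian) (hAB : (A - B).PosSemidef) {f : ℝ → ℝ} {s : Set ℝ}
    (hf : ConvexOn ℝ s f) (hf_mono : MonotoneOn f s) (hAs : ∀ i, hA.eigenvalues i ∈ s)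
    (hBs : ∀ i, hB.eigenvalues i ∈ s) :
    ∑ j, f (hB.eigenvalues j) ≤ ∑ i, f (hA.eigenvalues i) := by
  set u := hA.eigenvectorBasis
  set v := hB.eigenvectorBasis
  have hBA : ∀ j, hB.eigenvalues j ≤ RCLike.re (star ⇑(v j) ⬝ᵥ (A *ᵥ ⇑(v j))) := fun j => by
    have h := hAB.re_dotProduct_nonneg (v j)
    rw [sub_mulVec, dotProduct_sub, map_sub, sub_nonneg] at h
    rwa [hB.eigenvalues_eq j]
  calc ∑ j, f (hB.eigenvalues j)
      ≤ ∑ j, f (RCLike.re (star ⇑(v j) ⬝ᵥ (A *ᵥ ⇑(v j)))) :=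
        Finset.sum_le_sum fun j _ => hf_mono (hBs j)
          (hA.re_dotProduct_mulVec_mem hf.1 hAs (v.orthonormal.1 j)) (hBA j)
    _ ≤ ∑ j, ∑ i, ‖⟪u i, v j⟫_𝕜‖ ^ 2 * f (hA.eigenvalues i) :=
        Finset.sum_le_sum fun j _ => hA.map_re_dotProduct_mulVec_le_sum hf hAs (v.orthonormal.1 j)
    _ = ∑ i, f (hA.eigenvalues i) := by
        rw [Finset.sum_comm]
        simp_rw [← Finset.sum_mul, OrthonormalBasis.sum_sq_norm_inner_left, u.orthonormal.1,
          one_pow, one_mul]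

end Matrix

lemma trace_matRpow {n : Type*} [Fintype n] [DecidableEq n] {A : Matrix n n ℂ}
    (hA : A.IsHermitian) (α : ℝ) :
    (matRpow A α).trace.re = ∑ i, hA.eigenvalues i ^ α := by
  rw [matRpow, dif_pos hA, trace_mul_cycle, ← star_eq_conjTranspose, Unitary.coe_star_mul_self,
    one_mul, trace_diagonal, Complex.re_sum]
  simp

/-- If `A ≥ B ≥ 0` and `α ≥ 1`, then `Tr[A^α] ≥ Tr[B^α]`. -/
theorem trace_rpow_monotone {n : Type*} [Fintype n] [DecidableEq n]
    (A B : Matrix n n ℂ) (hA : A.PosSemidef) (hB : B.PosSemidef) (hAB : (A - B).PosSemidef)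
    (α : ℝ) (hα : 1 ≤ α) :
    (matRpow B α).trace.re ≤ (matRpow A α).trace.re := by
  rw [trace_matRpow hA.isHermitian, trace_matRpow hB.isHermitian]
  exact sum_map_eigenvalues_le_of_posSemidef_sub hA.isHermitian hB.isHermitian hAB
    (convexOn_rpow hα) (Real.monotoneOn_rpow_Ici_of_exponent_nonneg (by linarith))
    hA.eigenvalues_nonneg hB.eigenvalues_nonneg
end

section
/- For α > 1, the sandwiched Rényi divergence D̃_α(ρ‖σ) = (α−1)^{−1} log Tr[(σ^{(1−α)/(2α)} ρ σ^{(1−α)/(2α)})^α] satisfies weak quasi-concavity: for any convex combination ρ = Σ_{i=1}^N p_i ρ_i of states with supports in supp(σ), D̃_α(ρ‖σ) ≥ min_{1≤i≤N} D̃_α(ρ_i‖σ) − (α/(α−1)) log N. -/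
/-!
Choose `j` with `p j ≥ 1/N`. Then `Σ pᵢ ρᵢ ≥ p j • ρ j` in the Loewner order, and conjugating
by `S = σ^((1-α)/(2α))` preserves this. For `α ≥ 1`, `A ≥ B ≥ 0` implies `Tr A^α ≥ Tr B^α`:
each eigenvalue `μₗ` of `B`, with eigenvector `fₗ`, is bounded by the `A`-expectation of `fₗ`,
which is an average of the eigenvalues `λₖ` of `A` (eigenvectors `eₖ`) with weights
`|⟨eₖ, fₗ⟩|²` forming a doubly stochastic matrix, so convexity and monotonicity of `t ↦ t^α`
give `Σ μₗ^α ≤ Σ λₖ^α`. Hence `Q̃_α(Σ pᵢ ρᵢ‖σ) ≥ p j^α Q̃_α(ρ j‖σ) ≥ N^(-α) Q̃_α(ρ j‖σ)`;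
taking logarithms and dividing by `α - 1` gives the claim.
-/

open Matrix BigOperators
open scoped ComplexOrder

/-- `Q̃_α(ρ‖σ) = Tr[(σ^((1-α)/(2α)) ρ σ^((1-α)/(2α)))^α]`. -/
noncomputable def Qtilde {n : Type*} [Fintype n] [DecidableEq n]
    (α : ℝ) (ρ σ : Matrix n n ℂ) : ℝ :=
  (matRpow (matRpow σ ((1 - α) / (2 * α)) * ρ * matRpow σ ((1 - α) / (2 * α))) α).trace.re

/-- The sandwiched Rényi divergence `D̃_α(ρ‖σ) = (α-1)⁻¹ log Q̃_α(ρ‖σ)`. -/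
noncomputable def sandwichedRenyi {n : Type*} [Fintype n] [DecidableEq n]
    (α : ℝ) (ρ σ : Matrix n n ℂ) : ℝ :=
  (α - 1)⁻¹ * Real.log (Qtilde α ρ σ)

section MatRpow

variable {n : Type*} [Fintype n] [DecidableEq n] {A : Matrix n n ℂ}

lemma matRpow_of_isHermitian (hA : A.IsHermitian) (α : ℝ) :
    matRpow A α = (hA.eigenvectorUnitary : Matrix n n ℂ) *
      diagonal (fun i => ((hA.eigenvalues i ^ α : ℝ) : ℂ)) *
      (hA.eigenvectorUnitary : Matrix n n ℂ)ᴴ :=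
  dif_pos hA

lemma isHermitian_matRpow (hA : A.IsHermitian) (α : ℝ) : (matRpow A α).IsHermitian := by
  rw [matRpow_of_isHermitian hA]
  exact isHermitian_mul_mul_conjTranspose _ (isHermitian_diagonal_of_self_adjoint _
    (funext fun i => Complex.conj_ofReal _))

lemma matRpow_mulVec_eigenvectorBasis (hA : A.IsHermitian) (α : ℝ) (k : n) :
    matRpow A α *ᵥ ⇑(hA.eigenvectorBasis k) =
      ((hA.eigenvalues k ^ α : ℝ) : ℂ) • ⇑(hA.eigenvectorBasis k) := by
  rw [matRpow_of_isHermitian hA, ← mulVec_mulVec, ← mulVec_mulVec, ← star_eq_conjTranspose,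
    hA.star_eigenvectorUnitary_mulVec, diagonal_mulVec_single, ← smul_eq_mul,
    Pi.single_smul', mulVec_smul, hA.eigenvectorUnitary_mulVec]

lemma re_trace_matRpow (hA : A.IsHermitian) (α : ℝ) :
    (matRpow A α).trace.re = ∑ i, hA.eigenvalues i ^ α := by
  rw [matRpow_of_isHermitian hA, trace_mul_cycle, ← star_eq_conjTranspose,
    Unitary.coe_star_mul_self, one_mul, trace_diagonal]
  simp

end MatRpow

section DoublyStochastic

variable {n : Type*} [Fintype n] [DecidableEq n]

lemma normSq_mem_doublyStochastic {W : Matrix n n ℂ} (hW : W ∈ unitaryGroup n ℂ) :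
    of (fun i j => Complex.normSq (W i j)) ∈ doublyStochastic ℝ n := by
  have diag_sum {M : Matrix n n ℂ} (hM : M * star M = 1) (i : n) :
      ∑ j, Complex.normSq (M i j) = 1 := by
    have h := congrArg Complex.re (congrFun (congrFun hM i) i)
    simpa [mul_apply, Complex.mul_conj, Complex.re_sum, star_eq_conjTranspose] using h
  refine mem_doublyStochastic_iff_sum.mpr ⟨fun i j => Complex.normSq_nonneg _,
    diag_sum (mem_unitaryGroup_iff.mp hW), fun j => ?_⟩
  simpa using diag_sum (mem_unitaryGroup_iff.mp (Unitary.star_mem hW)) j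

lemma sum_le_sum_of_le_vecMul_of_mem_doublyStochastic {f : ℝ → ℝ}
    (hf : ConvexOn ℝ (Set.Ici 0) f) (hf_mono : MonotoneOn f (Set.Ici 0))
    {C : Matrix n n ℝ} (hC : C ∈ doublyStochastic ℝ n) {x y : n → ℝ}
    (hx : ∀ i, 0 ≤ x i) (hy : ∀ j, 0 ≤ y j) (hyx : ∀ j, y j ≤ (x ᵥ* C) j) :
    ∑ j, f (y j) ≤ ∑ i, f (x i) := by
  have hC0 : ∀ i j, 0 ≤ C i j := fun _ _ => nonneg_of_mem_doublyStochastic hC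
  calc ∑ j, f (y j) ≤ ∑ j, f ((x ᵥ* C) j) := by
        refine Finset.sum_le_sum fun j _ => hf_mono (hy j) ?_ (hyx j)
        exact Finset.sum_nonneg fun i _ => mul_nonneg (hx i) (hC0 i j)
    _ ≤ ∑ j, ∑ i, C i j * f (x i) := by
        refine Finset.sum_le_sum fun j _ => ?_
        simpa only [vecMul, dotProduct, smul_eq_mul, mul_comm (x _)] using
          hf.map_sum_le (fun i _ => hC0 i j) (sum_col_of_mem_doublyStochastic hC j)
            fun i _ => hx i
    _ = ∑ i, f (x i) := by
        rw [Finset.sum_comm]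
        simp only [← Finset.sum_mul, sum_row_of_mem_doublyStochastic hC, one_mul]

end DoublyStochastic

section TraceMonotone

variable {n : Type*} [Fintype n] [DecidableEq n]

lemma Matrix.IsHermitian.re_dotProduct_mulVec_eq_sum_s13 {A : Matrix n n ℂ} (hA : A.IsHermitian)
    (v : n → ℂ) :
    (star v ⬝ᵥ A *ᵥ v).re = ∑ k, hA.eigenvalues k *
      Complex.normSq ((star (hA.eigenvectorUnitary : Matrix n n ℂ) *ᵥ v) k) := by
  set U := (hA.eigenvectorUnitary : Matrix n n ℂ)
  have hAv : A *ᵥ v = U *ᵥ (diagonal (RCLike.ofReal ∘ hA.eigenvalues) *ᵥ (star U *ᵥ v)) := by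
    conv_lhs => rw [hA.spectral_theorem]
    rw [Unitary.conjStarAlgAut_apply, mulVec_mulVec, mulVec_mulVec, mul_assoc]
  have hvU : star v ᵥ* U = star (star U *ᵥ v) := by
    rw [star_mulVec, star_eq_conjTranspose, conjTranspose_conjTranspose]
  rw [hAv, dotProduct_mulVec, hvU, dotProduct, Complex.re_sum]
  refine Finset.sum_congr rfl fun k _ => ?_
  simp [mulVec_diagonal, Complex.normSq_apply]
  ring

lemma rpow_mul_re_trace_matRpow_le {A B : Matrix n n ℂ} (hA : A.PosSemidef)
    (hB : B.PosSemidef) {p : ℝ} (hp : 0 ≤ p) (hAB : (A - (p : ℂ) • B).PosSemidef)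
    {α : ℝ} (hα : 1 ≤ α) :
    p ^ α * (matRpow B α).trace.re ≤ (matRpow A α).trace.re := by
  set U := (hA.1.eigenvectorUnitary : Matrix n n ℂ)
  set V := (hB.1.eigenvectorUnitary : Matrix n n ℂ)
  have hUV : star U * V ∈ unitaryGroup n ℂ :=
    Submonoid.mul_mem _ (Unitary.star_mem hA.1.eigenvectorUnitary.2) hB.1.eigenvectorUnitary.2
  -- `p μₗ` is the `p • B`-expectation of the `l`-th eigenvector of `B`, hence below its
  -- `A`-expectation, which is an average of the eigenvalues of `A`.
  have hpB_le (l : n) :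
      p * hB.1.eigenvalues l ≤
        (hA.1.eigenvalues ᵥ* of fun k l => Complex.normSq ((star U * V) k l)) l := by
    have hv : star U *ᵥ ⇑(hB.1.eigenvectorBasis l) = fun k => (star U * V) k l := by
      rw [← hB.1.eigenvectorUnitary_mulVec, mulVec_mulVec, mulVec_single_one]; rfl
    have hBl : (star ⇑(hB.1.eigenvectorBasis l) ⬝ᵥ B *ᵥ ⇑(hB.1.eigenvectorBasis l)).re =
        hB.1.eigenvalues l := (hB.1.eigenvalues_eq l).symm
    have hquad := hAB.re_dotProduct_nonneg ⇑(hB.1.eigenvectorBasis l)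
    rw [sub_mulVec, dotProduct_sub, smul_mulVec, dotProduct_smul, RCLike.re_to_complex,
      Complex.sub_re, smul_eq_mul, Complex.re_ofReal_mul, hBl,
      hA.1.re_dotProduct_mulVec_eq_sum_s13, hv] at hquad
    simpa [vecMul, dotProduct] using hquad
  rw [re_trace_matRpow hA.1, re_trace_matRpow hB.1, Finset.mul_sum]
  simp_rw [← Real.mul_rpow hp (hB.eigenvalues_nonneg _)]
  exact sum_le_sum_of_le_vecMul_of_mem_doublyStochastic (convexOn_rpow hα)
    (Real.monotoneOn_rpow_Ici_of_exponent_nonneg (by linarith)) (normSq_mem_doublyStochastic hUV)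
    hA.eigenvalues_nonneg (fun l => mul_nonneg hp (hB.eigenvalues_nonneg l)) hpB_le

end TraceMonotone

section Sandwiched

variable {n : Type*} [Fintype n] [DecidableEq n] {ρ ρ' σ : Matrix n n ℂ}

lemma posSemidef_matRpow_mul_mul_matRpow (hρ : ρ.PosSemidef) (hσ : σ.IsHermitian) (s : ℝ) :
    (matRpow σ s * ρ * matRpow σ s).PosSemidef := by
  simpa only [(isHermitian_matRpow hσ s).eq] using hρ.mul_mul_conjTranspose_same (matRpow σ s)

lemma matRpow_mul_mul_matRpow_ne_zero (hρ : ρ.PosSemidef) (hρ0 : ρ ≠ 0) (hσ : σ.PosSemidef)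
    (hsupp : ∀ v, σ *ᵥ v = 0 → ρ *ᵥ v = 0) (s : ℝ) :
    matRpow σ s * ρ * matRpow σ s ≠ 0 := by
  intro h0
  apply hρ0
  set S := matRpow σ s
  have hρS (x : n → ℂ) : ρ *ᵥ (S *ᵥ x) = 0 := by
    refine (hρ.dotProduct_mulVec_zero_iff _).mp ?_
    have hx : star x ⬝ᵥ (S * ρ * S) *ᵥ x = 0 := by simp [h0]
    have hxS : star x ᵥ* S = star (S *ᵥ x) := by
      rw [star_mulVec, (isHermitian_matRpow hσ.1 s).eq]
    rwa [← mulVec_mulVec, ← mulVec_mulVec, dotProduct_mulVec, hxS] at hx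
  -- On the kernel of `σ` this is the support hypothesis; on the other eigenvectors `S` acts
  -- invertibly, so it follows from `hρS`.
  have hρe (k : n) : ρ *ᵥ ⇑(hσ.1.eigenvectorBasis k) = 0 := by
    rcases (hσ.eigenvalues_nonneg k).eq_or_lt with hk | hk
    · apply hsupp
      rw [hσ.1.mulVec_eigenvectorBasis, ← hk, zero_smul]
    · have h := hρS (hσ.1.eigenvectorBasis k)
      rw [matRpow_mulVec_eigenvectorBasis, mulVec_smul, smul_eq_zero] at h
      exact h.resolve_left (by exact_mod_cast (Real.rpow_pos_of_pos hk s).ne')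
  exact toEuclideanLin.injective <| hσ.1.eigenvectorBasis.toBasis.ext fun k => by
    simp [toLpLin_apply, hρe k]

lemma Qtilde_pos (hρ : ρ.PosSemidef) (hρ0 : ρ ≠ 0) (hσ : σ.PosSemidef)
    (hsupp : ∀ v, σ *ᵥ v = 0 → ρ *ᵥ v = 0) (α : ℝ) :
    0 < Qtilde α ρ σ := by
  have hM := posSemidef_matRpow_mul_mul_matRpow hρ hσ.1 ((1 - α) / (2 * α))
  obtain ⟨k, hk⟩ : ∃ k, hM.1.eigenvalues k ≠ 0 := by
    by_contra! h
    exact matRpow_mul_mul_matRpow_ne_zero hρ hρ0 hσ hsupp _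
      (hM.1.eigenvalues_eq_zero_iff.mp (funext h))
  rw [Qtilde, re_trace_matRpow hM.1]
  exact Finset.sum_pos' (fun i _ => Real.rpow_nonneg (hM.eigenvalues_nonneg i) α)
    ⟨k, Finset.mem_univ k, Real.rpow_pos_of_pos ((hM.eigenvalues_nonneg k).lt_of_ne' hk) α⟩

lemma rpow_mul_Qtilde_le (hσ : σ.IsHermitian) (hρ : ρ.PosSemidef) (hρ' : ρ'.PosSemidef)
    {p : ℝ} (hp : 0 ≤ p) (hρρ' : (ρ - (p : ℂ) • ρ').PosSemidef) {α : ℝ} (hα : 1 ≤ α) :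
    p ^ α * Qtilde α ρ' σ ≤ Qtilde α ρ σ := by
  set S := matRpow σ ((1 - α) / (2 * α))
  refine rpow_mul_re_trace_matRpow_le (posSemidef_matRpow_mul_mul_matRpow hρ hσ _)
    (posSemidef_matRpow_mul_mul_matRpow hρ' hσ _) hp ?_ hα
  have h : S * ρ * S - (p : ℂ) • (S * ρ' * S) = S * (ρ - (p : ℂ) • ρ') * S := by
    rw [mul_sub, sub_mul, Matrix.mul_smul, Matrix.smul_mul]
  rw [h]
  exact posSemidef_matRpow_mul_mul_matRpow hρρ' hσ _

lemma rpow_mul_Qtilde_le_Qtilde_sum {ι : Type*} [Fintype ι] (hσ : σ.IsHermitian)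
    {p : ι → ℝ} (hp : ∀ i, 0 ≤ p i) {ρ : ι → Matrix n n ℂ} (hρ : ∀ i, (ρ i).PosSemidef)
    (j : ι) {α : ℝ} (hα : 1 ≤ α) :
    p j ^ α * Qtilde α (ρ j) σ ≤ Qtilde α (∑ i, (p i : ℂ) • ρ i) σ := by
  classical
  have hsum (s : Finset ι) : (∑ i ∈ s, (p i : ℂ) • ρ i).PosSemidef :=
    posSemidef_sum s fun i _ => (hρ i).smul (by exact_mod_cast hp i)
  refine rpow_mul_Qtilde_le hσ (hsum _) (hρ j) (hp j) ?_ hα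
  rw [← Finset.add_sum_erase _ _ (Finset.mem_univ j), add_sub_cancel_left]
  exact hsum _

lemma sandwichedRenyi_add_le_of_rpow_mul_Qtilde_le {p α : ℝ} (hα : 1 < α) (hp : 0 < p)
    (hQ : 0 < Qtilde α ρ' σ) (h : p ^ α * Qtilde α ρ' σ ≤ Qtilde α ρ σ) :
    sandwichedRenyi α ρ' σ + α / (α - 1) * Real.log p ≤ sandwichedRenyi α ρ σ := by
  have hpα : 0 < p ^ α := Real.rpow_pos_of_pos hp α
  have hlog := Real.log_le_log (mul_pos hpα hQ) h
  rw [Real.log_mul hpα.ne' hQ.ne', Real.log_rpow hp] at hlog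
  have hα1 : 0 < α - 1 := sub_pos.mpr hα
  calc sandwichedRenyi α ρ' σ + α / (α - 1) * Real.log p
      = (α - 1)⁻¹ * (α * Real.log p + Real.log (Qtilde α ρ' σ)) := by
        unfold sandwichedRenyi; ring
    _ ≤ (α - 1)⁻¹ * Real.log (Qtilde α ρ σ) := by gcongr

end Sandwiched

theorem sandwichedRenyi_weak_quasi_concavity_general {d : ℕ} (N : ℕ) (hN : 0 < N)
    (p : Fin N → ℝ) (hp : ∀ i, 0 ≤ p i) (hpsum : ∑ i, p i = 1)
    (ρi : Fin N → Matrix (Fin d) (Fin d) ℂ)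
    (hρi : ∀ i, (ρi i).PosSemidef) (hρtr : ∀ i, (ρi i).trace = 1)
    (σ : Matrix (Fin d) (Fin d) ℂ) (hσ : σ.PosSemidef)
    (hsupp : ∀ i, ∀ v : Fin d → ℂ, σ.mulVec v = 0 → (ρi i).mulVec v = 0)
    (α : ℝ) (hα : 1 < α) :
    (Finset.univ.inf' (Finset.univ_nonempty_iff.mpr (Fin.pos_iff_nonempty.mp hN))
        fun i => sandwichedRenyi α (ρi i) σ)
      - (α / (α - 1)) * Real.log N
      ≤ sandwichedRenyi α (∑ i, (p i : ℂ) • ρi i) σ := by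
  obtain ⟨j, -, hj⟩ : ∃ j ∈ Finset.univ, (N : ℝ)⁻¹ ≤ p j :=
    Finset.exists_le_of_sum_le ⟨⟨0, hN⟩, Finset.mem_univ _⟩ (by simp [hpsum, hN.ne'])
  have hpj : 0 < p j := (inv_pos.mpr (Nat.cast_pos.mpr hN)).trans_le hj
  have hρj : ρi j ≠ 0 := fun h => by simpa [h] using hρtr j
  have hlog : -Real.log N ≤ Real.log (p j) := by
    rw [← Real.log_inv]
    exact Real.log_le_log (by positivity) hj
  have hcoef : 0 ≤ α / (α - 1) := div_nonneg (by linarith) (by linarith)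
  calc _ ≤ sandwichedRenyi α (ρi j) σ + α / (α - 1) * Real.log (p j) := by
        rw [sub_eq_add_neg, ← mul_neg]
        gcongr
        exact Finset.inf'_le _ (Finset.mem_univ j)
    _ ≤ _ := sandwichedRenyi_add_le_of_rpow_mul_Qtilde_le hα hpj
        (Qtilde_pos (hρi j) hρj hσ (hsupp j) α)
        (rpow_mul_Qtilde_le_Qtilde_sum hσ.1 hp hρi j hα.le)

/-- Weak quasi-concavity of the sandwiched Rényi divergence for `α > 1`:
`D̃_α(Σ_i p_i ρ_i‖σ) ≥ min_i D̃_α(ρ_i‖σ) − (α/(α−1)) log N`. -/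
theorem sandwichedRenyi_weak_quasi_concavity {d : ℕ} (N : ℕ) (hN : 0 < N)
    (p : Fin N → ℝ) (hp : ∀ i, 0 ≤ p i) (hpsum : ∑ i, p i = 1)
    (ρi : Fin N → Matrix (Fin d) (Fin d) ℂ)
    (hρi : ∀ i, (ρi i).PosSemidef) (hρtr : ∀ i, (ρi i).trace = 1)
    (σ : Matrix (Fin d) (Fin d) ℂ) (hσ : σ.PosSemidef) (hσtr : σ.trace = 1)
    (hsupp : ∀ i, ∀ v : Fin d → ℂ, σ.mulVec v = 0 → (ρi i).mulVec v = 0)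
    (α : ℝ) (hα : 1 < α) :
    (Finset.univ.inf' (Finset.univ_nonempty_iff.mpr (Fin.pos_iff_nonempty.mp hN))
        fun i => sandwichedRenyi α (ρi i) σ)
      - (α / (α - 1)) * Real.log N
      ≤ sandwichedRenyi α (∑ i, (p i : ℂ) • ρi i) σ :=
  sandwichedRenyi_weak_quasi_concavity_general N hN p hp hpsum ρi hρi hρtr σ hσ hsupp α hα
end
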